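/- arXiv:1505.01080 — 2 statements merged into one kernel-verified Lean document; each statement's English description precedes it below -/
import Mathlib

section
/- The overlattice N₊ = ℤ² + (1/5)(3,1)ℤ of ℤ² with diagonal form diag(20, −30) is an even integral lattice isomorphic to the lattice with Gram matrix [[6,6],[6,2]]. -/
/-- The bilinear form `diag(20, −30)` on `ℚ²`. -/
def bQp (x y : ℚ × ℚ) : ℚ := 20 * x.1 * y.1 - 30 * x.2 * y.2

/-- The overlattice `N₊ = ℤ² + (1/5)(3,1)ℤ` of `ℤ²` inside `ℚ²`. -/
def NplusLat : AddSubgroup (ℚ × ℚ) :=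
  AddSubgroup.closure {(1, 0), (0, 1), (3 / 5, 1 / 5)}

/-- The Gram form `[[6,6],[6,2]]` on `ℤ²`. -/
def gPlus (u v : ℤ × ℤ) : ℤ :=
  6 * u.1 * v.1 + 6 * u.1 * v.2 + 6 * u.2 * v.1 + 2 * u.2 * v.2


/-- The basis `H = (3/5, 1/5)`, `E = (2/5, -1/5)` of `N₊`, so that `(1,0) = H + E` and
`(0,1) = 2H - 3E`. -/
def nplusBasis : ℤ × ℤ →+ ℚ × ℚ :=
  (zmultiplesHom _ (3 / 5, 1 / 5)).coprod (zmultiplesHom _ (2 / 5, -1 / 5))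

lemma nplusBasis_apply (p : ℤ × ℤ) :
    nplusBasis p = ((3 * (p.1 : ℚ) + 2 * p.2) / 5, ((p.1 : ℚ) - p.2) / 5) := by
  ext <;> simp [nplusBasis] <;> ring

lemma range_nplusBasis : nplusBasis.range = NplusLat := by
  have hH : ((3 / 5 : ℚ), (1 / 5 : ℚ)) ∈ NplusLat := AddSubgroup.subset_closure (by simp)
  have hE : ((2 / 5 : ℚ), (-1 / 5 : ℚ)) ∈ NplusLat := by
    have h1 : ((1 : ℚ), (0 : ℚ)) ∈ NplusLat := AddSubgroup.subset_closure (by simp)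
    convert sub_mem h1 hH using 2 <;> norm_num
  apply le_antisymm
  · rintro _ ⟨p, rfl⟩
    exact add_mem (zsmul_mem hH p.1) (zsmul_mem hE p.2)
  · refine (AddSubgroup.closure_le _).2 ?_
    rintro x (rfl | rfl | rfl)
    · exact ⟨(1, 1), by rw [nplusBasis_apply]; norm_num⟩
    · exact ⟨(2, -3), by rw [nplusBasis_apply]; norm_num⟩
    · exact ⟨(1, 0), by rw [nplusBasis_apply]; norm_num⟩

lemma nplusBasis_injective : Function.Injective nplusBasis := by
  refine (injective_iff_map_eq_zero _).2 fun p hp => ?_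
  rw [nplusBasis_apply, Prod.mk_eq_zero] at hp
  obtain ⟨h₁, h₂⟩ := hp
  have h₁' : 3 * p.1 + 2 * p.2 = 0 := by
    exact_mod_cast (div_eq_zero_iff.1 h₁).resolve_right (by norm_num)
  have h₂' : p.1 - p.2 = 0 := by
    exact_mod_cast (div_eq_zero_iff.1 h₂).resolve_right (by norm_num)
  ext <;> simp <;> omega

lemma bQp_nplusBasis (u v : ℤ × ℤ) : bQp (nplusBasis u) (nplusBasis v) = gPlus u v := by
  simp only [bQp, gPlus, nplusBasis_apply]
  push_cast
  ring

lemma gPlus_self (u : ℤ × ℤ) : gPlus u u = 2 * (3 * u.1 ^ 2 + 6 * u.1 * u.2 + u.2 ^ 2) := by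
  simp only [gPlus]
  ring

/-- `N₊ = ℤ² + (1/5)(3,1)ℤ` with form `diag(20,−30)` is an even integral
lattice isomorphic to the lattice with Gram matrix `[[6,6],[6,2]]`. -/
theorem NplusLat_even_integral_isometric :
    (∀ x ∈ NplusLat, ∀ y ∈ NplusLat, ∃ n : ℤ, bQp x y = n) ∧
    (∀ x ∈ NplusLat, ∃ n : ℤ, bQp x x = 2 * n) ∧
    (∃ e : (ℤ × ℤ) ≃+ NplusLat,
      ∀ u v : ℤ × ℤ, bQp (e u : ℚ × ℚ) (e v : ℚ × ℚ) = gPlus u v) := by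
  refine ⟨?_, ?_, ?_⟩
  · rintro _ hx _ hy
    obtain ⟨u, rfl⟩ := range_nplusBasis ▸ hx
    obtain ⟨v, rfl⟩ := range_nplusBasis ▸ hy
    exact ⟨gPlus u v, bQp_nplusBasis u v⟩
  · rintro _ hx
    obtain ⟨u, rfl⟩ := range_nplusBasis ▸ hx
    refine ⟨3 * u.1 ^ 2 + 6 * u.1 * u.2 + u.2 ^ 2, ?_⟩
    rw [bQp_nplusBasis, gPlus_self]
    push_cast
    rfl
  · exact ⟨(AddMonoidHom.ofInjective nplusBasis_injective).trans
      (AddEquiv.addSubgroupCongr range_nplusBasis), fun u v => bQp_nplusBasis u v⟩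
end

section
/- Inside the lattice W = ℤ³ + (1/5)(3,0,1)ℤ + (1/3)(0,2,1)ℤ with form diag(20,30,−30), the sublattices N₊ = span of first and third coordinates with glue (1/5)(3,0,1), and N₋ = span of second and third coordinates with glue (1/3)(0,2,1), satisfy N₊ ∩ N₋ = ℤ·e₃ where e₃² = −30, and W is generated by N₊ and N₋. -/
/-- The bilinear form `diag(20, 30, −30)` on `ℚ³`. -/
def bW3 (x y : Fin 3 → ℚ) : ℚ := 20 * x 0 * y 0 + 30 * x 1 * y 1 - 30 * x 2 * y 2

/-- The overlattice `W = ℤ³ + (1/5)(3,0,1)ℤ + (1/3)(0,2,1)ℤ`. -/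
def Wlat3 : AddSubgroup (Fin 3 → ℚ) :=
  AddSubgroup.closure {![1, 0, 0], ![0, 1, 0], ![0, 0, 1],
    ![3 / 5, 0, 1 / 5], ![0, 2 / 3, 1 / 3]}

/-- `N₊ = ℤe₁ + ℤe₃ + ℤ(3/5,0,1/5)`. -/
def NplusIn : AddSubgroup (Fin 3 → ℚ) :=
  AddSubgroup.closure {![1, 0, 0], ![0, 0, 1], ![3 / 5, 0, 1 / 5]}

/-- `N₋ = ℤe₂ + ℤe₃ + ℤ(0,2/3,1/3)`. -/
def NminusIn : AddSubgroup (Fin 3 → ℚ) :=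
  AddSubgroup.closure {![0, 1, 0], ![0, 0, 1], ![0, 2 / 3, 1 / 3]}

/-! The generators of `W` are those of `N₊` together with those of `N₋`. For the intersection,
`N₊` lies in `x₁ = 0`, `N₋` in `x₀ = 0`, and all of `W` in `x₂ - 2x₀ - 2x₁ ∈ ℤ`; so a common
element is `(0, 0, n)` with `n ∈ ℤ`. -/

theorem NplusIn_sup_NminusIn : NplusIn ⊔ NminusIn = Wlat3 := by
  rw [NplusIn, NminusIn, ← AddSubgroup.closure_union, Wlat3]
  congr 1
  ext x
  simp only [Set.mem_union, Set.mem_insert_iff, Set.mem_singleton_iff]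
  tauto

/-- Integral on both glue vectors because `2·3 ≡ 1 (mod 5)` and `2·2 ≡ 1 (mod 3)`. -/
def glueFunctional : (Fin 3 → ℚ) →+ ℚ :=
  AddMonoidHom.mk' (fun x => x 2 - 2 * x 0 - 2 * x 1) fun x y => by simp only [Pi.add_apply]; ring

theorem Wlat3_le_comap_glueFunctional :
    Wlat3 ≤ (Int.castAddHom ℚ).range.comap glueFunctional := by
  rw [Wlat3, AddSubgroup.closure_le]
  simp only [Set.insert_subset_iff, Set.singleton_subset_iff, SetLike.mem_coe,
    AddSubgroup.mem_comap, AddMonoidHom.mem_range]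
  refine ⟨⟨-2, ?_⟩, ⟨-2, ?_⟩, ⟨1, ?_⟩, ⟨-1, ?_⟩, ⟨-1, ?_⟩⟩ <;>
    norm_num [glueFunctional, Matrix.cons_val_two]

theorem NplusIn_le_ker_eval_one : NplusIn ≤ (Pi.evalAddMonoidHom (fun _ => ℚ) 1).ker := by
  rw [NplusIn, AddSubgroup.closure_le]
  simp [Set.insert_subset_iff]

theorem NminusIn_le_ker_eval_zero : NminusIn ≤ (Pi.evalAddMonoidHom (fun _ => ℚ) 0).ker := by
  rw [NminusIn, AddSubgroup.closure_le]
  simp [Set.insert_subset_iff]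

theorem NplusIn_inf_NminusIn : NplusIn ⊓ NminusIn = AddSubgroup.closure {![0, 0, 1]} := by
  refine le_antisymm ?_ ?_
  · rintro x ⟨hplus, hminus⟩
    have hx1 : x 1 = 0 := NplusIn_le_ker_eval_one hplus
    have hx0 : x 0 = 0 := NminusIn_le_ker_eval_zero hminus
    obtain ⟨n, hn⟩ := Wlat3_le_comap_glueFunctional
      (NplusIn_sup_NminusIn ▸ AddSubgroup.mem_sup_left hplus)
    rw [← AddSubgroup.zmultiples_eq_closure, AddSubgroup.mem_zmultiples_iff]
    refine ⟨n, funext fun i => ?_⟩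
    fin_cases i <;> simp_all [glueFunctional]
  · rw [AddSubgroup.closure_le, Set.singleton_subset_iff]
    exact ⟨AddSubgroup.subset_closure (by simp), AddSubgroup.subset_closure (by simp)⟩

/-- `W` is the orthogonal pushout of `N₊` and `N₋` along `R = (−30)`:
`N₊ + N₋ = W`, `N₊ ∩ N₋ = ℤe₃` with `e₃² = −30`, and the generators of `N₊`
pair with those of `N₋` only through the shared `e₃` component. -/
theorem W_orthogonal_pushout :
    NplusIn ⊔ NminusIn = Wlat3 ∧
    NplusIn ⊓ NminusIn = AddSubgroup.closure {![0, 0, 1]} ∧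
    bW3 ![0, 0, 1] ![0, 0, 1] = -30 ∧
    bW3 ![1, 0, 0] ![0, 1, 0] = 0 ∧
    bW3 ![1, 0, 0] ![0, 2 / 3, 1 / 3] = 0 ∧
    bW3 ![3 / 5, 0, 1 / 5] ![0, 1, 0] = 0 ∧
    bW3 ![3 / 5, 0, 1 / 5] ![0, 2 / 3, 1 / 3] = (1 / 5) * (1 / 3) * (-30) := by
  refine ⟨NplusIn_sup_NminusIn, NplusIn_inf_NminusIn, ?_⟩
  norm_num [bW3, Matrix.cons_val_two]
end
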